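/- Let X be a real random variable with 0 < E|X| < ∞, and let K be the inverse of G(t) = t²/(H(t) + t M(t)). Then K(x)/x is nonincreasing in x and converges to 0 as x → ∞. -/
import Mathlib


open MeasureTheory ProbabilityTheory Filter Set
open scoped ProbabilityTheory

theorem stmt_2 {Ω : Type*} [MeasureSpace Ω] [IsProbabilityMeasure (ℙ : Measure Ω)]
    (X : Ω → ℝ) (hX : Measurable X)
    (hInt : Integrable X) (hpos : 0 < ∫ ω, |X ω|)
    (H M G K : ℝ → ℝ)
    (hH : ∀ t, H t = ∫ ω, (if |X ω| ≤ t then (X ω) ^ 2 else 0))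
    (hM : ∀ t, M t = ∫ ω, (if t < |X ω| then |X ω| else 0))
    (hG : ∀ t, G t = t ^ 2 / (H t + t * M t))
    (hKG : ∀ t > 0, K (G t) = t) (hGK : ∀ x > 0, G (K x) = x) :
    AntitoneOn (fun x => K x / x) (Ioi 0) ∧
    Tendsto (fun x => K x / x) atTop (nhds 0) := by
  have habs : Integrable (fun ω => |X ω|) := hInt.abs
  -- integrability of the truncated pieces
  have intH : ∀ t : ℝ, Integrable (fun ω => if |X ω| ≤ t then (X ω) ^ 2 else 0) := by
    intro t
    apply (integrable_const (t ^ 2)).mono'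
    · exact (Measurable.ite (measurableSet_le hX.abs measurable_const)
        (hX.pow_const 2) measurable_const).aestronglyMeasurable
    · filter_upwards with ω
      by_cases h : |X ω| ≤ t
      · simp only [h, if_true]
        rw [Real.norm_eq_abs, abs_of_nonneg (sq_nonneg _), ← sq_abs]
        exact pow_le_pow_left₀ (abs_nonneg _) h 2
      · simp [h, sq_nonneg t]
  have intM : ∀ t : ℝ, Integrable (fun ω => if t < |X ω| then |X ω| else 0) := by
    intro t
    apply habs.mono'
    · exact (Measurable.ite (measurableSet_lt measurable_const hX.abs)
        hX.abs measurable_const).aestronglyMeasurable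
    · filter_upwards with ω
      by_cases h : t < |X ω| <;> simp [h, abs_nonneg, abs_abs, le_abs_self]
  -- the combination H t + t * M t as a single integral
  have intmin : ∀ t : ℝ, 0 < t → Integrable (fun ω => min ((X ω) ^ 2) (t * |X ω|)) := by
    intro t ht
    apply (habs.const_mul t).mono'
      (((hX.pow_const 2).min (hX.abs.const_mul t)).aestronglyMeasurable)
    filter_upwards with ω
    rw [Real.norm_eq_abs,
      abs_of_nonneg (le_min (sq_nonneg _) (mul_nonneg ht.le (abs_nonneg _)))]
    exact min_le_right _ _
  have hA : ∀ t : ℝ, 0 < t → H t + t * M t = ∫ ω, min ((X ω) ^ 2) (t * |X ω|) := by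
    intro t ht
    rw [hH, hM, ← integral_const_mul, ← integral_add (intH t) ((intM t).const_mul t)]
    apply integral_congr_ae
    filter_upwards with ω
    by_cases h : |X ω| ≤ t
    · have h1 : (X ω) ^ 2 ≤ t * |X ω| := by
        rw [← sq_abs, sq]
        exact mul_le_mul_of_nonneg_right h (abs_nonneg _)
      simp [h, not_lt.mpr h, min_eq_left h1]
    · push_neg at h
      have h1 : t * |X ω| ≤ (X ω) ^ 2 := by
        rw [← sq_abs, sq]
        exact mul_le_mul_of_nonneg_right h.le (abs_nonneg _)
      simp [not_le.mpr h, h, min_eq_right h1]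
  -- positivity of the integral
  have hApos : ∀ t : ℝ, 0 < t → 0 < ∫ ω, min ((X ω) ^ 2) (t * |X ω|) := by
    intro t ht
    have hnn : 0 ≤ fun ω => min ((X ω) ^ 2) (t * |X ω|) := fun ω =>
      le_min (sq_nonneg _) (mul_nonneg ht.le (abs_nonneg _))
    rw [integral_pos_iff_support_of_nonneg hnn (intmin t ht)]
    have hsupp : Function.support (fun ω => min ((X ω) ^ 2) (t * |X ω|)) =
        Function.support (fun ω => |X ω|) := by
      ext ω
      simp only [Function.mem_support, ne_eq]
      constructor
      · intro h h0
        have hx0 : X ω = 0 := abs_eq_zero.mp h0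
        exact h (by simp [hx0])
      · intro h
        have ha : 0 < |X ω| := lt_of_le_of_ne (abs_nonneg _) (Ne.symm h)
        have : 0 < min ((X ω) ^ 2) (t * |X ω|) := by
          rw [← sq_abs]
          exact lt_min (pow_pos ha 2) (mul_pos ht ha)
        exact ne_of_gt this
    rw [hsupp]
    rw [← integral_pos_iff_support_of_nonneg (fun ω => abs_nonneg (X ω)) habs]
    exact hpos
  -- antitonicity of t ↦ (∫ min) / t
  have hphianti : ∀ s t : ℝ, 0 < s → s ≤ t →
      (∫ ω, min ((X ω) ^ 2) (t * |X ω|)) / t ≤ (∫ ω, min ((X ω) ^ 2) (s * |X ω|)) / s := by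
    intro s t hs hst
    have ht : 0 < t := lt_of_lt_of_le hs hst
    rw [div_le_div_iff₀ ht hs]
    calc (∫ ω, min ((X ω) ^ 2) (t * |X ω|)) * s
        = ∫ ω, s * min ((X ω) ^ 2) (t * |X ω|) := by
          rw [integral_const_mul]; ring
      _ ≤ ∫ ω, t * min ((X ω) ^ 2) (s * |X ω|) := by
          apply integral_mono ((intmin t ht).const_mul s) ((intmin s hs).const_mul t)
          intro ω
          have ha : 0 ≤ |X ω| := abs_nonneg _
          rcases le_total ((X ω) ^ 2) (t * |X ω|) with h1 | h1 <;>
            rcases le_total ((X ω) ^ 2) (s * |X ω|) with h2 | h2 <;>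
            simp only [min_eq_left, min_eq_right, h1, h2] <;> nlinarith
      _ = (∫ ω, min ((X ω) ^ 2) (s * |X ω|)) * t := by
          rw [integral_const_mul]; ring
  -- K is positive on positive reals
  have hc : 0 < ∫ ω, |X ω| := hpos
  have hK0 : ∀ x : ℝ, 0 < x → 0 < K x := by
    intro x hx
    have hgk := hGK x hx
    rw [hG] at hgk
    rcases lt_trichotomy (K x) 0 with h | h | h
    · exfalso
      have hHz : H (K x) = 0 := by
        rw [hH]
        have : ∀ ω, (if |X ω| ≤ K x then (X ω) ^ 2 else 0) = 0 := by
          intro ω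
          rw [if_neg]
          intro hle
          exact absurd (le_trans (abs_nonneg _) hle) (not_le.mpr h)
        simp only [this, integral_zero]
      have hMz : M (K x) = ∫ ω, |X ω| := by
        rw [hM]
        apply integral_congr_ae
        filter_upwards with ω
        rw [if_pos (lt_of_lt_of_le h (abs_nonneg _))]
      rw [hHz, hMz, zero_add] at hgk
      have hKne : K x ≠ 0 := ne_of_lt h
      have : (K x) ^ 2 / (K x * ∫ ω, |X ω|) = K x / ∫ ω, |X ω| := by
        rw [sq]
        rw [mul_div_mul_left _ _ hKne]
      rw [this] at hgk
      have : K x / (∫ ω, |X ω|) < 0 := div_neg_of_neg_of_pos h hc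
      linarith [hgk ▸ this]
    · exfalso
      rw [h] at hgk
      simp at hgk
      linarith
    · exact h
  -- for x > 0, x = (K x)^2 / I(K x)
  have hxeq : ∀ x : ℝ, 0 < x →
      x = (K x) ^ 2 / (∫ ω, min ((X ω) ^ 2) (K x * |X ω|)) := by
    intro x hx
    have := hGK x hx
    rw [hG, hA (K x) (hK0 x hx)] at this
    exact this.symm
  -- key identity K x / x = I(K x) / K x
  have hkey : ∀ x : ℝ, 0 < x →
      K x / x = (∫ ω, min ((X ω) ^ 2) (K x * |X ω|)) / K x := by
    intro x hx
    have hk := hK0 x hx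
    have hI := hApos (K x) hk
    have hx2 := hxeq x hx
    set t := K x with hT
    rw [hx2]
    field_simp
  -- strict monotonicity of G on positives, expressed via the formula
  have hGstrict : ∀ s t : ℝ, 0 < s → s < t →
      s ^ 2 / (∫ ω, min ((X ω) ^ 2) (s * |X ω|)) <
      t ^ 2 / (∫ ω, min ((X ω) ^ 2) (t * |X ω|)) := by
    intro s t hs hst
    have ht : 0 < t := lt_trans hs hst
    have hIs := hApos s hs
    have hIt := hApos t ht
    have hphi := hphianti s t hs hst.le
    rw [div_lt_div_iff₀ hIs hIt]
    rw [div_le_div_iff₀ ht hs] at hphi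
    nlinarith [mul_le_mul_of_nonneg_left hphi hs.le,
      mul_lt_mul_of_pos_right hst (mul_pos ht hIt), sq_nonneg s, sq_nonneg t]
  -- monotonicity of K on positives
  have hKmono : ∀ x y : ℝ, 0 < x → x ≤ y → K x ≤ K y := by
    intro x y hx hxy
    by_contra hcon
    push_neg at hcon
    have hy : 0 < y := lt_of_lt_of_le hx hxy
    have := hGstrict (K y) (K x) (hK0 y hy) hcon
    rw [← hxeq x hx, ← hxeq y hy] at this
    linarith
  constructor
  · -- AntitoneOn
    intro x hx y hy hxy
    simp only [mem_Ioi] at hx hy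
    simp only
    rw [hkey x hx, hkey y hy]
    exact hphianti (K x) (K y) (hK0 x hx) (hKmono x y hx hxy)
  · -- Tendsto
    have hKtop : Tendsto K atTop atTop := by
      rw [tendsto_atTop]
      intro b
      set T := max b 1 with hT
      have hTpos : 0 < T := lt_of_lt_of_le one_pos (le_max_right _ _)
      have hGT : 0 < T ^ 2 / (∫ ω, min ((X ω) ^ 2) (T * |X ω|)) :=
        div_pos (by positivity) (hApos T hTpos)
      filter_upwards [eventually_ge_atTop (T ^ 2 / (∫ ω, min ((X ω) ^ 2) (T * |X ω|)) + 1)]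
        with x hxge
      have hx : 0 < x := by linarith
      have hk := hK0 x hx
      by_contra hcon
      push_neg at hcon
      have hlt : K x < T := lt_of_lt_of_le hcon (le_max_left _ _)
      have := hGstrict (K x) T hk hlt
      rw [← hxeq x hx] at this
      linarith
    have hphi0 : Tendsto (fun t => (∫ ω, min ((X ω) ^ 2) (t * |X ω|)) / t) atTop (nhds 0) := by
      have hdct : Tendsto (fun t => ∫ ω, min ((X ω) ^ 2 / t) (|X ω|)) atTop
          (nhds (∫ _ : Ω, (0 : ℝ))) := by
        apply tendsto_integral_filter_of_dominated_convergence (fun ω => |X ω|)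
        · filter_upwards with t
          exact (((hX.pow_const 2).div_const t).min hX.abs).aestronglyMeasurable
        · filter_upwards [eventually_gt_atTop (0 : ℝ)] with t ht
          filter_upwards with ω
          rw [Real.norm_eq_abs, abs_of_nonneg (le_min (by positivity) (abs_nonneg _))]
          exact min_le_right _ _
        · exact habs
        · filter_upwards with ω
          apply squeeze_zero' (g := fun t => (X ω) ^ 2 / t)
          · filter_upwards [eventually_gt_atTop (0 : ℝ)] with t ht
            exact le_min (by positivity) (abs_nonneg _)
          · filter_upwards with t
            exact min_le_left _ _
          · exact Tendsto.div_atTop tendsto_const_nhds tendsto_id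
      rw [integral_zero] at hdct
      apply hdct.congr'
      filter_upwards [eventually_gt_atTop (0 : ℝ)] with t ht
      rw [eq_comm, ← integral_div]
      apply integral_congr_ae
      filter_upwards with ω
      rw [← min_div_div_right ht.le, mul_div_cancel_left₀ _ (ne_of_gt ht)]
    have := hphi0.comp hKtop
    apply this.congr'
    filter_upwards [eventually_gt_atTop (0 : ℝ)] with x hx
    exact (hkey x hx).symm
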